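/- Let (X, f) be a topologically chain transitive dynamical system on a uniform space and E an entourage with ι_E = 1. Then for every x ∈ X there exist two E-chains from x to itself with relatively prime lengths. -/

import Mathlib

open Set Filter Function

variable {X : Type*}

/-- An `E`-chain of length `n` from `x` to `y` for the map `f`. -/
def ChainFrom (f : X → X) (E : Set (X × X)) (n : ℕ) (x y : X) : Prop :=
  ∃ c : ℕ → X, c 0 = x ∧ c n = y ∧ ∀ i < n, (f (c i), c (i + 1)) ∈ E

/-- Topological chain transitivity on a uniform space. -/
def ChainTransitive [UniformSpace X] (f : X → X) : Prop :=
  ∀ E ∈ uniformity X, ∀ x y : X, ∃ n ≥ 1, ChainFrom f E n x y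

/-- Lengths of `E`-chains from `x` to itself (loops). -/
def LoopLengths (f : X → X) (E : Set (X × X)) (x : X) : Set ℕ :=
  {n | 1 ≤ n ∧ ChainFrom f E n x x}

/-- `g` is the greatest common divisor of the set `S` of naturals. -/
def IsGcdOfSet (g : ℕ) (S : Set ℕ) : Prop :=
  (∀ n ∈ S, g ∣ n) ∧ ∀ d : ℕ, (∀ n ∈ S, d ∣ n) → d ∣ g

/-- The relation `x ∼_E y`: some `E`-chain from `x` to `y` has length a multiple of `ι`. -/
def SimE (f : X → X) (E : Set (X × X)) (ι : ℕ) (x y : X) : Prop :=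
  ∃ n, ι ∣ n ∧ ChainFrom f E n x y

/-- Topological shadowing property on a uniform space. -/
def Shadowing [UniformSpace X] (f : X → X) : Prop :=
  ∀ E ∈ uniformity X, ∃ D ∈ uniformity X,
    ∀ x : ℕ → X, (∀ i, (f (x i), x (i + 1)) ∈ D) →
      ∃ y, ∀ n, (f^[n] y, x n) ∈ E

/-- Topological chain mixing on a uniform space. -/
def ChainMixing [UniformSpace X] (f : X → X) : Prop :=
  ∀ D ∈ uniformity X, ∀ x y : X, ∃ N ≥ 1, ∀ n ≥ N, ChainFrom f D n x y

/-- A non-wandering point of `f`. -/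
def NonWandering [TopologicalSpace X] (f : X → X) (x : X) : Prop :=
  ∀ V ∈ nhds x, ∃ n ≥ 1, (V ∩ f^[n] ⁻¹' V).Nonempty

/-- Topological transitivity. -/
def TopTransitive [TopologicalSpace X] (f : X → X) : Prop :=
  ∀ U V : Set X, IsOpen U → IsOpen V → U.Nonempty → V.Nonempty →
    ∃ n : ℕ, (U ∩ f^[n] ⁻¹' V).Nonempty

/-- A syndetic set of natural numbers (bounded gaps). -/
def Syndetic (A : Set ℕ) : Prop :=
  ∃ k : ℕ, ∀ n : ℕ, ∃ m, n ≤ m ∧ m ≤ n + k ∧ m ∈ A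

/-- A minimal (almost periodic) point of `f`. -/
def MinimalPt [TopologicalSpace X] (f : X → X) (y : X) : Prop :=
  ∀ V ∈ nhds y, Syndetic {n : ℕ | f^[n] y ∈ V}

/-- Equicontinuity of a dynamical system on a uniform space. -/
def Equicont [UniformSpace X] (f : X → X) : Prop :=
  ∀ E ∈ uniformity X, ∃ D ∈ uniformity X, ∀ n : ℕ, ∀ p ∈ D, (f^[n] p.1, f^[n] p.2) ∈ E

/-!
Concatenating loops at `x` adds their lengths, so the loop lengths form an additive semigroup
of positive integers. A semigroup of gcd `1` contains every sufficiently large integer (it has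
a Frobenius number), in particular two consecutive ones.
-/

theorem ChainFrom.trans {f : X → X} {E : Set (X × X)} {n m : ℕ} {x y z : X}
    (h₁ : ChainFrom f E n x y) (h₂ : ChainFrom f E m y z) : ChainFrom f E (n + m) x z := by
  obtain ⟨c, rfl, rfl, hc⟩ := h₁
  obtain ⟨d, hd₀, rfl, hd⟩ := h₂
  refine ⟨fun i => if i ≤ n then c i else d (i - n), by simp, ?_, fun i hi => ?_⟩
  · rcases m.eq_zero_or_pos with rfl | hm
    · simp [hd₀]
    · simp [show ¬n + m ≤ n by omega]
  · rcases lt_or_ge i n with hin | hni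
    · simpa [hin.le, Nat.succ_le_of_lt hin] using hc i hin
    · obtain ⟨j, rfl⟩ := Nat.exists_eq_add_of_le hni
      rcases j.eq_zero_or_pos with rfl | hj
      · simpa [hd₀] using hd 0 (by omega)
      · simpa [show ¬n + j ≤ n by omega, show ¬n + j + 1 ≤ n by omega, Nat.add_assoc]
          using hd j (by omega)

theorem add_mem_loopLengths {f : X → X} {E : Set (X × X)} {x : X} {n m : ℕ}
    (hn : n ∈ LoopLengths f E x) (hm : m ∈ LoopLengths f E x) : n + m ∈ LoopLengths f E x :=
  ⟨hn.1.trans (Nat.le_add_right n m), hn.2.trans hm.2⟩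

theorem IsGcdOfSet.eq_setGcd {g : ℕ} {S : Set ℕ} (h : IsGcdOfSet g S) : g = Nat.setGcd S :=
  Nat.dvd_antisymm (Nat.dvd_setGcd_iff.mpr h.1) (h.2 _ fun _ => Nat.setGcd_dvd_of_mem)

theorem Nat.eventually_mem_of_add_mem_of_setGcd_eq_one {S : Set ℕ}
    (hadd : ∀ a ∈ S, ∀ b ∈ S, a + b ∈ S) (hS : setGcd S = 1) : ∀ᶠ n in atTop, n ∈ S := by
  have hclosure : ∀ n ∈ AddSubmonoid.closure S, n = 0 ∨ n ∈ S := fun n hn =>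
    AddSubmonoid.closure_induction (fun n hn => .inr hn) (.inl rfl)
      (by rintro a b - - (rfl | ha) (rfl | hb) <;> simp [*]) hn
  obtain ⟨N, hN⟩ := exists_mem_closure_of_ge S
  filter_upwards [eventually_ge_atTop (N + 1)] with n hn
  exact (hclosure n (hN n (by omega) (hS ▸ one_dvd n))).resolve_left (by omega)

theorem exists_coprime_loops_general (f : X → X)
    (E : Set (X × X))
    (hgcd : ∀ y : X, IsGcdOfSet 1 (LoopLengths f E y)) :
    ∀ x : X, ∃ n ∈ LoopLengths f E x, ∃ m ∈ LoopLengths f E x, Nat.gcd n m = 1 := by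
  intro x
  obtain ⟨N, hN⟩ := eventually_atTop.mp <| Nat.eventually_mem_of_add_mem_of_setGcd_eq_one
    (fun _ ha _ hb => add_mem_loopLengths ha hb) (hgcd x).eq_setGcd.symm
  exact ⟨N, hN N le_rfl, N + 1, hN (N + 1) N.le_succ,
    Nat.coprime_self_add_right.mpr N.coprime_one_right⟩

theorem exists_coprime_loops [UniformSpace X] (f : X → X)
    (hf : UniformContinuous f) (ht : ChainTransitive f)
    (E : Set (X × X)) (hE : E ∈ uniformity X)
    (hgcd : ∀ y : X, IsGcdOfSet 1 (LoopLengths f E y)) :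
    ∀ x : X, ∃ n ∈ LoopLengths f E x, ∃ m ∈ LoopLengths f E x, Nat.gcd n m = 1 :=
  exists_coprime_loops_general f E hgcd
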